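/- arXiv:2210.02700 — 10 statements merged into one kernel-verified Lean document; each statement's English description precedes it below -/
import Mathlib

section
/- Let M be a real p×q matrix, M⁺ a q×p generalized inverse of M (i.e. M M⁺ M = M and M⁺ M M⁺ = M⁺), and N a real r×q matrix. Then N (I_q − M⁺ M) = 0 if and only if the rank of the (r+p)×q stacked matrix [N; M] (rows of N on top of rows of M) equals the rank of M. -/
/-!
Both sides say that every row of `N` lies in the row space of `M`. Since `M⁺ M` is a projection
onto that row space (`M M⁺ M = M`), a row vector `v` lies in it iff `v M⁺ M = v`; and appending
rows to `M` keeps the rank iff they already lie in its row space.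
-/

open Set Submodule

namespace Matrix

variable {R : Type*}

theorem span_row_fromRows {m₁ m₂ n : Type*} [Semiring R] (A : Matrix m₁ n R)
    (B : Matrix m₂ n R) :
    span R (range (fromRows A B).row) = span R (range A.row) ⊔ span R (range B.row) := by
  rw [← span_union, ← Sum.elim_range]
  rfl

section CommSemiring

variable [CommSemiring R] {m n k : Type*} [Fintype m] [Fintype n]

theorem mem_span_row_iff_vecMul_mul_eq {M : Matrix m n R} {Mp : Matrix n m R}
    (hM : M * Mp * M = M) (v : n → R) :
    v ∈ span R (range M.row) ↔ v ᵥ* (Mp * M) = v := by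
  rw [← range_vecMulLinear]
  constructor
  · rintro ⟨w, rfl⟩
    simp only [vecMulLinear_apply, vecMul_vecMul, ← Matrix.mul_assoc, hM]
  · intro hv
    exact ⟨v ᵥ* Mp, by rw [vecMulLinear_apply, vecMul_vecMul, hv]⟩

theorem span_row_le_span_row_iff_mul_mul_eq {M : Matrix m n R} {Mp : Matrix n m R}
    (hM : M * Mp * M = M) (N : Matrix k n R) :
    span R (range N.row) ≤ span R (range M.row) ↔ N * (Mp * M) = N := by
  rw [span_le, range_subset_iff]
  refine (forall_congr' fun i => ?_).trans funext_iff.symm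
  rw [mul_apply_eq_vecMul]
  exact mem_span_row_iff_vecMul_mul_eq hM (N i)

end CommSemiring

section Field

variable [Field R] {m₁ m₂ n : Type*} [Finite m₁] [Finite m₂] [Fintype n]

theorem rank_fromRows_eq_rank_iff (A : Matrix m₁ n R) (B : Matrix m₂ n R) :
    (fromRows A B).rank = B.rank ↔ span R (range A.row) ≤ span R (range B.row) := by
  rw [rank_eq_finrank_span_row, rank_eq_finrank_span_row, span_row_fromRows, ← sup_eq_right]
  exact ⟨fun h => (eq_of_le_of_finrank_eq le_sup_right h.symm).symm, fun h => by rw [h]⟩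

end Field

end Matrix

theorem stmt0_general {p q r : ℕ} (M : Matrix (Fin p) (Fin q) ℝ) (Mp : Matrix (Fin q) (Fin p) ℝ)
    (hMp1 : M * Mp * M = M)
    (N : Matrix (Fin r) (Fin q) ℝ) :
    N * ((1 : Matrix (Fin q) (Fin q) ℝ) - Mp * M) = 0 ↔
      (Matrix.fromRows N M).rank = M.rank := by
  rw [Matrix.rank_fromRows_eq_rank_iff, Matrix.span_row_le_span_row_iff_mul_mul_eq hMp1,
    Matrix.mul_sub, Matrix.mul_one, sub_eq_zero, eq_comm]

/-- For a real `p × q` matrix `M` with generalized inverse `M⁺`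
(`M * M⁺ * M = M`, `M⁺ * M * M⁺ = M⁺`) and a real `r × q` matrix `N`,
`N (I_q − M⁺ M) = 0` iff `rank [N; M] = rank M`. -/
theorem stmt0 {p q r : ℕ} (M : Matrix (Fin p) (Fin q) ℝ) (Mp : Matrix (Fin q) (Fin p) ℝ)
    (hMp1 : M * Mp * M = M) (hMp2 : Mp * M * Mp = Mp)
    (N : Matrix (Fin r) (Fin q) ℝ) :
    N * ((1 : Matrix (Fin q) (Fin q) ℝ) - Mp * M) = 0 ↔
      (Matrix.fromRows N M).rank = M.rank :=
  stmt0_general M Mp hMp1 N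
end

section
/- Let M be a real p×q matrix, M⁺ a q×p generalized inverse of M (i.e. M M⁺ M = M and M⁺ M M⁺ = M⁺), and N a real p×r matrix. Then (I_p − M M⁺) N = 0 if and only if the rank of the p×(r+q) augmented matrix [N M] (columns of N followed by columns of M) equals the rank of M. -/
/-!
Since `M M⁺ M = M`, the matrix `I - M M⁺` kills the column space of `M`, and conversely every
vector `x` it kills equals `M (M⁺ x)`; so its kernel is exactly the column space of `M`, and
`(I - M M⁺) N = 0` says that the columns of `N` lie in the column space of `M`. The column space
of `[N M]` is the sum of those of `N` and of `M`, and it contains that of `M`; so the two ranks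
agree exactly when the column space of `N` is contained in that of `M`.
-/

open LinearMap

namespace Matrix

variable {R : Type*} {m n o : Type*}

theorem col_fromCols (N : Matrix m n R) (M : Matrix m o R) :
    (fromCols N M).col = Sum.elim N.col M.col := by
  ext (j | j) i <;> rfl

variable [Fintype n] [Fintype o]

theorem range_mulVecLin_fromCols [CommSemiring R] (N : Matrix m n R) (M : Matrix m o R) :
    range (fromCols N M).mulVecLin = range N.mulVecLin ⊔ range M.mulVecLin := by
  simp only [range_mulVecLin, ← Submodule.span_union, col_fromCols, Set.Sum.elim_range]

theorem rank_fromCols_eq_rank_right_iff {K : Type*} [Field K] [Finite m]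
    (N : Matrix m n K) (M : Matrix m o K) :
    (fromCols N M).rank = M.rank ↔ range N.mulVecLin ≤ range M.mulVecLin := by
  rw [rank, rank, range_mulVecLin_fromCols, ← sup_eq_right]
  exact ⟨fun h => (Submodule.eq_of_le_of_finrank_eq le_sup_right h.symm).symm,
    fun h => by rw [h]⟩

theorem mul_eq_zero_iff_range_le_ker [CommSemiring R] (A : Matrix m n R) (B : Matrix n o R) :
    A * B = 0 ↔ range B.mulVecLin ≤ ker A.mulVecLin := by
  classical
  rw [range_le_ker_iff, ← mulVecLin_mul, ← toLin'_apply', map_eq_zero_iff _ toLin'.injective]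

theorem ker_mulVecLin_one_sub_mul_eq_range [CommRing R] [Fintype m] [DecidableEq m]
    {M : Matrix m o R} {G : Matrix o m R} (h : M * G * M = M) :
    ker (1 - M * G).mulVecLin = range M.mulVecLin := by
  apply le_antisymm
  · intro x hx
    refine ⟨G *ᵥ x, ?_⟩
    simpa [sub_mulVec, sub_eq_zero, eq_comm] using hx
  · rw [← mul_eq_zero_iff_range_le_ker, Matrix.sub_mul, Matrix.one_mul, h, sub_self]

end Matrix

theorem stmt1_general {p q r : ℕ} (M : Matrix (Fin p) (Fin q) ℝ) (Mp : Matrix (Fin q) (Fin p) ℝ)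
    (hMp1 : M * Mp * M = M)
    (N : Matrix (Fin p) (Fin r) ℝ) :
    ((1 : Matrix (Fin p) (Fin p) ℝ) - M * Mp) * N = 0 ↔
      (Matrix.fromCols N M).rank = M.rank := by
  rw [Matrix.mul_eq_zero_iff_range_le_ker, Matrix.ker_mulVecLin_one_sub_mul_eq_range hMp1,
    Matrix.rank_fromCols_eq_rank_right_iff]

/-- For a real `p × q` matrix `M` with generalized inverse `M⁺`
(`M * M⁺ * M = M`, `M⁺ * M * M⁺ = M⁺`) and a real `p × r` matrix `N`,
`(I_p − M M⁺) N = 0` iff `rank [N M] = rank M`. -/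
theorem stmt1 {p q r : ℕ} (M : Matrix (Fin p) (Fin q) ℝ) (Mp : Matrix (Fin q) (Fin p) ℝ)
    (hMp1 : M * Mp * M = M) (hMp2 : Mp * M * Mp = Mp)
    (N : Matrix (Fin p) (Fin r) ℝ) :
    ((1 : Matrix (Fin p) (Fin p) ℝ) - M * Mp) * N = 0 ↔
      (Matrix.fromCols N M).rank = M.rank :=
  stmt1_general M Mp hMp1 N
end

section
/- With C̄ = (I_m − F F⁺) C, Ē = E (I_q − F⁺ F), and G = I_n − Ē (C̄ Ē)⁺ C̄, the following are equivalent: (1°) rank of the 2m×2q block matrix [[0, F],[F, C E]] equals rank F + rank of the (n+m)×q stacked matrix [E; F]; (2°) G Ē = 0. -/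
/-!
Column elimination with `F⁺` turns `[[0, F], [F, C E]]` into `[[0, F], [F, C̄ E]]`. Since
`F F⁺ C̄ = 0` and `Ē` agrees with `E` on `ker F`, the kernel of that matrix is
`ker F × (ker F ∩ ker C̄Ē)`, while `ker [E; F] = ker F ∩ ker Ē`. By rank–nullity, (1°) says that
these two subspaces of `ker F` have the same dimension, i.e. `ker F ∩ ker C̄Ē ⊆ ker Ē`. As `Ē` and
`C̄Ē` factor through the projection `I - F⁺F` onto `ker F`, this means `ker C̄Ē ⊆ ker Ē`, which is
`G Ē = Ē (I - (C̄Ē)⁺ C̄Ē) = 0` because `I - B⁺B` projects onto `ker B`.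
-/

open Matrix Module LinearMap

theorem Submodule.finrank_prod {R M N : Type*} [DivisionRing R] [AddCommGroup M] [AddCommGroup N]
    [Module R M] [Module R N] [FiniteDimensional R M] [FiniteDimensional R N]
    (p : Submodule R M) (s : Submodule R N) :
    finrank R (p.prod s) = finrank R p + finrank R s := by
  let e : p.prod s ≃ₗ[R] p × s :=
    { toFun := fun x => (⟨x.1.1, x.2.1⟩, ⟨x.1.2, x.2.2⟩)
      map_add' := fun _ _ => rfl
      map_smul' := fun _ _ => rfl
      invFun := fun y => ⟨(y.1.1, y.2.1), ⟨y.1.2, y.2.2⟩⟩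
      left_inv := fun _ => rfl
      right_inv := fun _ => rfl }
  rw [e.finrank_eq, Module.finrank_prod]

namespace Matrix

variable {K : Type*} [Field K] {l m n p : Type*} [Fintype n]

theorem rank_add_finrank_ker (A : Matrix m n K) :
    A.rank + finrank K (ker A.mulVecLin) = Fintype.card n := by
  rw [rank, finrank_range_add_finrank_ker, finrank_fintype_fun_eq_card]

theorem ker_fromRows (A : Matrix l n K) (B : Matrix m n K) :
    ker (fromRows A B).mulVecLin = ker A.mulVecLin ⊓ ker B.mulVecLin := by
  ext v
  simp [fromRows_mulVec, ← Sum.elim_zero_zero, Sum.elim_eq_iff]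

variable [Fintype m] {F : Matrix m n K} {F' : Matrix n m K}

theorem isIdempotentElem_mul_of_mul_mul_eq (hF : F * F' * F = F) : IsIdempotentElem (F' * F) := by
  rw [IsIdempotentElem, Matrix.mul_assoc, ← Matrix.mul_assoc F, hF]

theorem isIdempotentElem_mul_of_mul_mul_eq' [DecidableEq m] (hF : F * F' * F = F) :
    IsIdempotentElem (F * F') := by
  rw [IsIdempotentElem, ← Matrix.mul_assoc, hF]

theorem ker_fromBlocks_zero (D : Matrix m n K) (hF : F * F' * F = F) (hD : F * F' * D = 0) :
    ker (fromBlocks 0 F F D).mulVecLin =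
      Submodule.comap (LinearEquiv.sumArrowLequivProdArrow n n K K).toLinearMap
        ((ker F.mulVecLin).prod (ker F.mulVecLin ⊓ ker D.mulVecLin)) := by
  ext x
  simp only [mem_ker, mulVecLin_apply, Submodule.mem_comap, Submodule.mem_prod, Submodule.mem_inf,
    LinearEquiv.coe_coe, fromBlocks_mulVec, zero_mulVec, zero_add, ← Sum.elim_zero_zero,
    Sum.elim_eq_iff]
  change _ ↔ F *ᵥ (x ∘ Sum.inl) = 0 ∧ F *ᵥ (x ∘ Sum.inr) = 0 ∧ D *ᵥ (x ∘ Sum.inr) = 0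
  generalize x ∘ Sum.inl = u, x ∘ Sum.inr = v
  constructor
  · rintro ⟨hv, huv⟩
    have hu : F *ᵥ u = 0 := by
      simpa [mulVec_add, mulVec_mulVec, hF, hD] using congrArg ((F * F') *ᵥ ·) huv
    exact ⟨hu, hv, by rwa [hu, zero_add] at huv⟩
  · rintro ⟨hu, hv, hDv⟩
    simp [hu, hv, hDv]

variable [DecidableEq n]

theorem range_mulVecLin_one_sub_mul (hF : F * F' * F = F) :
    range (1 - F' * F).mulVecLin = ker F.mulVecLin := by
  apply le_antisymm
  · rw [range_le_ker_iff, ← mulVecLin_mul, Matrix.mul_sub, Matrix.mul_one, ← Matrix.mul_assoc, hF,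
      sub_self, mulVecLin_zero]
  · intro v hv
    rw [mem_ker, mulVecLin_apply] at hv
    refine ⟨v, ?_⟩
    rw [mulVecLin_apply, sub_mulVec, one_mulVec, ← mulVec_mulVec, hv, mulVec_zero, sub_zero]

theorem mul_one_sub_mul_eq_zero_iff (hF : F * F' * F = F) (A : Matrix l n K) :
    A * (1 - F' * F) = 0 ↔ ker F.mulVecLin ≤ ker A.mulVecLin := by
  rw [← range_mulVecLin_one_sub_mul hF, range_le_ker_iff, ← mulVecLin_mul, ← toLin'_apply',
    LinearEquiv.map_eq_zero_iff]

theorem inf_ker_mul_one_sub_mul (F' : Matrix n m K) (A : Matrix l n K) :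
    ker F.mulVecLin ⊓ ker (A * (1 - F' * F)).mulVecLin = ker F.mulVecLin ⊓ ker A.mulVecLin := by
  ext v
  simp only [Submodule.mem_inf, mem_ker, mulVecLin_apply, and_congr_right_iff]
  intro hv
  rw [← mulVec_mulVec, sub_mulVec, one_mulVec, ← mulVec_mulVec, hv, mulVec_zero, sub_zero]

theorem inf_ker_le_iff_ker_le (hF : F * F' * F = F) {A : Matrix l n K} {B : Matrix p n K}
    (hA : A * (1 - F' * F) = A) (hB : B * (1 - F' * F) = B) :
    ker F.mulVecLin ⊓ ker A.mulVecLin ≤ ker B.mulVecLin ↔ ker A.mulVecLin ≤ ker B.mulVecLin := by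
  refine ⟨fun h v hv => ?_, fun h => inf_le_right.trans h⟩
  have hPv : (1 - F' * F) *ᵥ v ∈ ker F.mulVecLin := by
    rw [← range_mulVecLin_one_sub_mul hF]
    exact mem_range_self _ v
  have hAPv : (1 - F' * F) *ᵥ v ∈ ker A.mulVecLin := by
    rwa [mem_ker, mulVecLin_apply, mulVec_mulVec, hA]
  have := h ⟨hPv, hAPv⟩
  rwa [mem_ker, mulVecLin_apply, mulVec_mulVec, hB] at this

theorem rank_fromBlocks_zero_eq [DecidableEq m] (D : Matrix m n K) (F' : Matrix n m K) :
    (fromBlocks 0 F F D).rank = (fromBlocks 0 F F ((1 - F * F') * D)).rank := by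
  have hS : IsUnit (fromBlocks 1 (-(F' * D)) 0 1 : Matrix (n ⊕ n) (n ⊕ n) K).det := by simp
  rw [← rank_mul_eq_left_of_isUnit_det _ _ hS, fromBlocks_multiply]
  simp [Matrix.sub_mul, Matrix.mul_assoc, neg_add_eq_sub]

theorem rank_fromBlocks_zero_add_finrank [DecidableEq m] (D : Matrix m n K)
    (hF : F * F' * F = F) :
    (fromBlocks 0 F F D).rank + (finrank K (ker F.mulVecLin) +
        finrank K ↥(ker F.mulVecLin ⊓ ker ((1 - F * F') * D).mulVecLin)) =
      Fintype.card n + Fintype.card n := by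
  have hD : F * F' * ((1 - F * F') * D) = 0 := by
    rw [← Matrix.mul_assoc, (isIdempotentElem_mul_of_mul_mul_eq' hF).mul_one_sub_self,
      Matrix.zero_mul]
  rw [rank_fromBlocks_zero_eq D F', ← Submodule.finrank_prod,
    ← LinearEquiv.finrank_map_eq (LinearEquiv.sumArrowLequivProdArrow n n K K).symm,
    ← Submodule.comap_equiv_eq_map_symm, ← ker_fromBlocks_zero _ hF hD, rank_add_finrank_ker,
    Fintype.card_sum]

end Matrix

theorem stmt2_general {n m q : ℕ}
    (C : Matrix (Fin m) (Fin n) ℝ) (E : Matrix (Fin n) (Fin q) ℝ)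
    (F : Matrix (Fin m) (Fin q) ℝ) (Fp : Matrix (Fin q) (Fin m) ℝ)
    (hFp1 : F * Fp * F = F)
    (Cbar : Matrix (Fin m) (Fin n) ℝ)
    (hCbar : Cbar = ((1 : Matrix (Fin m) (Fin m) ℝ) - F * Fp) * C)
    (Ebar : Matrix (Fin n) (Fin q) ℝ)
    (hEbar : Ebar = E * ((1 : Matrix (Fin q) (Fin q) ℝ) - Fp * F))
    (CEp : Matrix (Fin q) (Fin m) ℝ)
    (hCEp1 : (Cbar * Ebar) * CEp * (Cbar * Ebar) = Cbar * Ebar)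
    (G : Matrix (Fin n) (Fin n) ℝ)
    (hG : G = (1 : Matrix (Fin n) (Fin n) ℝ) - Ebar * CEp * Cbar) :
    (Matrix.fromBlocks (0 : Matrix (Fin m) (Fin q) ℝ) F F (C * E)).rank =
        F.rank + (Matrix.fromRows E F).rank ↔
      G * Ebar = 0 := by
  have hP : IsIdempotentElem (1 - Fp * F) := (isIdempotentElem_mul_of_mul_mul_eq hFp1).one_sub
  have hEbarP : Ebar * (1 - Fp * F) = Ebar := by rw [hEbar, Matrix.mul_assoc, hP.eq]
  have hCEbarP : Cbar * Ebar * (1 - Fp * F) = Cbar * Ebar := by rw [Matrix.mul_assoc, hEbarP]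
  have hBlock := rank_fromBlocks_zero_add_finrank (C * E) hFp1
  rw [← Matrix.mul_assoc, ← hCbar, ← inf_ker_mul_one_sub_mul Fp, Matrix.mul_assoc, ← hEbar]
    at hBlock
  have hRows := rank_add_finrank_ker (fromRows E F)
  rw [ker_fromRows, inf_comm, ← inf_ker_mul_one_sub_mul Fp, ← hEbar] at hRows
  have hF := rank_add_finrank_ker F
  set KF := ker F.mulVecLin
  have hle : KF ⊓ ker Ebar.mulVecLin ≤ KF ⊓ ker (Cbar * Ebar).mulVecLin := by
    rw [mulVecLin_mul]
    exact inf_le_inf_left _ (ker_le_ker_comp _ _)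
  have hGEbar : G * Ebar = Ebar * (1 - CEp * (Cbar * Ebar)) := by
    rw [hG, Matrix.sub_mul, Matrix.mul_sub, Matrix.one_mul, Matrix.mul_one]
    simp only [Matrix.mul_assoc]
  calc _ ↔ finrank ℝ ↥(KF ⊓ ker (Cbar * Ebar).mulVecLin) =
          finrank ℝ ↥(KF ⊓ ker Ebar.mulVecLin) := by omega
    _ ↔ KF ⊓ ker (Cbar * Ebar).mulVecLin ≤ KF ⊓ ker Ebar.mulVecLin :=
        ⟨fun h => (Submodule.eq_of_le_of_finrank_eq hle h.symm).ge,
          fun h => by rw [le_antisymm h hle]⟩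
    _ ↔ ker (Cbar * Ebar).mulVecLin ≤ ker Ebar.mulVecLin := by
        rw [le_inf_iff, inf_ker_le_iff_ker_le hFp1 hCEbarP hEbarP]
        exact and_iff_right inf_le_left
    _ ↔ G * Ebar = 0 := by rw [hGEbar, mul_one_sub_mul_eq_zero_iff hCEp1]

/-- Lemma 1: With `C̄ = (I_m − F F⁺) C`, `Ē = E (I_q − F⁺ F)` and
`G = I_n − Ē (C̄ Ē)⁺ C̄`, the condition
`rank [[0, F],[F, C E]] = rank F + rank [E; F]` is equivalent to `G Ē = 0`. -/
theorem stmt2 {n m q : ℕ}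
    (C : Matrix (Fin m) (Fin n) ℝ) (E : Matrix (Fin n) (Fin q) ℝ)
    (F : Matrix (Fin m) (Fin q) ℝ) (Fp : Matrix (Fin q) (Fin m) ℝ)
    (hFp1 : F * Fp * F = F) (hFp2 : Fp * F * Fp = Fp)
    (Cbar : Matrix (Fin m) (Fin n) ℝ)
    (hCbar : Cbar = ((1 : Matrix (Fin m) (Fin m) ℝ) - F * Fp) * C)
    (Ebar : Matrix (Fin n) (Fin q) ℝ)
    (hEbar : Ebar = E * ((1 : Matrix (Fin q) (Fin q) ℝ) - Fp * F))
    (CEp : Matrix (Fin q) (Fin m) ℝ)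
    (hCEp1 : (Cbar * Ebar) * CEp * (Cbar * Ebar) = Cbar * Ebar)
    (hCEp2 : CEp * (Cbar * Ebar) * CEp = CEp)
    (G : Matrix (Fin n) (Fin n) ℝ)
    (hG : G = (1 : Matrix (Fin n) (Fin n) ℝ) - Ebar * CEp * Cbar) :
    (Matrix.fromBlocks (0 : Matrix (Fin m) (Fin q) ℝ) F F (C * E)).rank =
        F.rank + (Matrix.fromRows E F).rank ↔
      G * Ebar = 0 :=
  stmt2_general C E F Fp hFp1 Cbar hCbar Ebar hEbar CEp hCEp1 G hG
end

section
/- Assume G Ē = 0 (condition 1° of Assumption 1). Then the following are equivalent: (a) for every s ∈ ℂ, the complexified (n+m)×(n+q) block matrix [[A − s I_n, E],[C, F]] has rank n + rank [E; F]; (b) for every s ∈ ℂ, the complexified (n+m)×n stacked matrix [s I_n − G Ā; C̄] has rank n, where Ā = A − E F⁺ C (i.e. the pair (G Ā, C̄) is observable in the PBH sense). -/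
/-!
Both rank conditions are kernel conditions. Since `rank [[X, E], [C, F]] = n + rank [E; F]`
exactly when the first `n` columns are independent and their span meets that of the last `q`
trivially, (a) says that `(A - sI)x + Ev = 0`, `Cx + Fv = 0` force `x = 0`; and (b) says that
`GĀx = sx`, `C̄x = 0` force `x = 0`. A solution `(x, v)` of the first system has `C̄x = 0`
(as `FF⁺F = F`), hence `Gx = x`, and `Āx = sx - Ēv`, so `GĀx = sx` because `GĒ = 0`.
Conversely an eigenvector `x` of `GĀ` in `ker C̄` solves the first system with `v = Vx`, where
the feedback `V = -F⁺C - (I - F⁺F)(C̄Ē)⁺C̄Ā` satisfies `A + EV = GĀ` and `C + FV = C̄`.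
Complex ranks of real matrices agree with real ranks because linear independence of real
vectors survives complexification.
-/

open Matrix Module

theorem LinearMap.ker_eq_bot_and_disjoint_range_iff {R V U W : Type*} [Ring R] [AddCommGroup V]
    [AddCommGroup U] [AddCommGroup W] [Module R V] [Module R U] [Module R W]
    (f : V →ₗ[R] W) (g : U →ₗ[R] W) :
    LinearMap.ker f = ⊥ ∧ Disjoint (LinearMap.range f) (LinearMap.range g) ↔
      ∀ x y, f x + g y = 0 → x = 0 := by
  constructor
  · rintro ⟨hker, hdisj⟩ x y hxy
    have hfx : f x = 0 := Submodule.disjoint_def.1 hdisj _ ⟨x, rfl⟩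
      ⟨-y, by rw [map_neg, eq_neg_of_add_eq_zero_left hxy]⟩
    exact LinearMap.ker_eq_bot'.1 hker x hfx
  · intro h
    refine ⟨LinearMap.ker_eq_bot'.2 fun x hx => h x 0 (by simp [hx]), ?_⟩
    rw [Submodule.disjoint_def]
    rintro _ ⟨x, rfl⟩ ⟨y, hy⟩
    rw [h x (-y) (by rw [map_neg, hy, add_neg_cancel]), map_zero]

namespace Matrix

universe u

variable {K : Type*} [Field K] {ι ι' β : Type*} {α : Type u} [Fintype α] [Fintype β]

theorem rank_eq_card_width_iff (M : Matrix ι α K) :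
    M.rank = Fintype.card α ↔ ∀ x, M *ᵥ x = 0 → x = 0 := by
  rw [rank_eq_finrank_span_cols, eq_comm, ← Set.finrank,
    ← linearIndependent_iff_card_eq_finrank_span, ← mulVec_injective_iff, ← coe_mulVecLin,
    injective_iff_map_eq_zero]

theorem rank_fromRows_eq_card_width_iff (M₁ : Matrix ι α K) (M₂ : Matrix ι' α K) :
    (fromRows M₁ M₂).rank = Fintype.card α ↔ ∀ x, M₁ *ᵥ x = 0 → M₂ *ᵥ x = 0 → x = 0 := by
  simp only [rank_eq_card_width_iff, fromRows_mulVec, ← Sum.elim_zero_zero, Sum.elim_eq_iff,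
    and_imp]

theorem rank_fromCols_eq_card_add_rank_iff (M₁ : Matrix ι α K) (M₂ : Matrix ι β K) :
    (fromCols M₁ M₂).rank = Fintype.card α + M₂.rank ↔
      ∀ x v, M₁ *ᵥ x + M₂ *ᵥ v = 0 → x = 0 := by
  have hsup : (fromCols M₁ M₂).rank = finrank K ↥(M₁.mulVecLin.range ⊔ M₂.mulVecLin.range) := by
    have hcol : (fromCols M₁ M₂).col = Sum.elim M₁.col M₂.col := by
      ext (i | i) <;> rfl
    rw [rank_eq_finrank_span_cols, range_mulVecLin, range_mulVecLin, ← Submodule.span_union,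
      ← Set.Sum.elim_range, hcol]
  have hdim := Submodule.finrank_sup_add_finrank_inf_eq M₁.mulVecLin.range M₂.mulVecLin.range
  have h₁ : M₁.rank = finrank K M₁.mulVecLin.range := rfl
  have h₂ : M₂.rank = finrank K M₂.mulVecLin.range := rfl
  have hle := M₁.rank_le_card_width
  have hiff : (fromCols M₁ M₂).rank = Fintype.card α + M₂.rank ↔
      M₁.rank = Fintype.card α ∧ finrank K ↥(M₁.mulVecLin.range ⊓ M₂.mulVecLin.range) = 0 := by
    omega
  rw [hiff, rank_eq_card_width_iff, Submodule.finrank_eq_zero, ← disjoint_iff]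
  exact (and_congr_left' LinearMap.ker_eq_bot'.symm).trans
    (LinearMap.ker_eq_bot_and_disjoint_range_iff M₁.mulVecLin M₂.mulVecLin)

theorem rank_fromBlocks_eq_card_add_rank_iff {γ : Type*} (X : Matrix ι α K) (E : Matrix ι β K)
    (C : Matrix γ α K) (F : Matrix γ β K) :
    (fromBlocks X E C F).rank = Fintype.card α + (fromRows E F).rank ↔
      ∀ x v, X *ᵥ x + E *ᵥ v = 0 → C *ᵥ x + F *ᵥ v = 0 → x = 0 := by
  simp only [← fromCols_fromRows_eq_fromBlocks, rank_fromCols_eq_card_add_rank_iff,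
    fromRows_mulVec, ← Sum.elim_add_add, ← Sum.elim_zero_zero, Sum.elim_eq_iff, and_imp]

theorem card_le_rank_of_linearIndependent_col {κ : Type*} [Fintype κ] (M : Matrix ι α K)
    {a : κ → α} (h : LinearIndependent K (M.col ∘ a)) : Fintype.card κ ≤ M.rank :=
  calc Fintype.card κ = (M.submatrix id a).rank := by
        rw [rank_eq_finrank_span_cols]; exact (finrank_span_eq_card h).symm
    _ ≤ M.rank := rank_submatrix_le M id a

theorem exists_linearIndependent_col_card_eq_rank (M : Matrix ι α K) :
    ∃ (κ : Type u) (_ : Fintype κ) (a : κ → α),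
      LinearIndependent K (M.col ∘ a) ∧ M.rank = Fintype.card κ := by
  obtain ⟨κ, a, ha, hspan, hli⟩ := exists_linearIndependent' K M.col
  have : Fintype κ := Fintype.ofInjective a ha
  exact ⟨κ, this, a, hli, by rw [rank_eq_finrank_span_cols, ← hspan, finrank_span_eq_card hli]⟩

theorem rank_map_algebraMap [Finite ι] {L : Type*} [Field L] [Algebra K L] (M : Matrix ι α K) :
    (M.map (algebraMap K L)).rank = M.rank := by
  have hcol : ∀ {κ : Type u} (a : κ → α),
      LinearIndependent L ((M.map (algebraMap K L)).col ∘ a) ↔ LinearIndependent K (M.col ∘ a) :=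
    fun a => linearIndependent_algebraMap_comp_iff (v := M.col ∘ a)
  obtain ⟨κ, _, a, hli, hrank⟩ := exists_linearIndependent_col_card_eq_rank (M.map (algebraMap K L))
  obtain ⟨κ', _, a', hli', hrank'⟩ := exists_linearIndependent_col_card_eq_rank M
  refine le_antisymm ?_ ?_
  · exact hrank ▸ card_le_rank_of_linearIndependent_col M ((hcol a).1 hli)
  · exact hrank' ▸ card_le_rank_of_linearIndependent_col _ ((hcol a').2 hli')

end Matrix

section

variable {R : Type*} [CommRing R] {n m q : Type*} [Fintype n] [Fintype m] [Fintype q]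
  {A : Matrix n n R} {C : Matrix m n R} {E : Matrix n q R} {F : Matrix m q R}
  {Fp : Matrix q m R} {Cbar : Matrix m n R} {Ebar : Matrix n q R} {CEp : Matrix q m R}
  {G Abar : Matrix n n R}

theorem add_mul_feedback_eq_G_mul_Abar [DecidableEq n] [DecidableEq q]
    (hEbar : Ebar = E * (1 - Fp * F)) (hG : G = 1 - Ebar * CEp * Cbar)
    (hAbar : Abar = A - E * Fp * C) :
    A + E * (-(Fp * C) - (1 - Fp * F) * CEp * Cbar * Abar) = G * Abar := by
  subst hEbar hG hAbar
  simp only [Matrix.mul_sub, Matrix.sub_mul, Matrix.mul_neg, Matrix.mul_one, Matrix.one_mul,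
    Matrix.mul_assoc]
  abel

theorem add_mul_feedback_eq_Cbar [DecidableEq m] [DecidableEq q] (hFp : F * Fp * F = F)
    (hCbar : Cbar = (1 - F * Fp) * C) :
    C + F * (-(Fp * C) - (1 - Fp * F) * CEp * Cbar * Abar) = Cbar := by
  have hF : F * ((1 - Fp * F) * CEp * Cbar * Abar) = 0 := by
    have hF₀ : F * (1 - Fp * F) = 0 := by
      rw [Matrix.mul_sub, Matrix.mul_one, ← Matrix.mul_assoc, hFp, sub_self]
    simp only [← Matrix.mul_assoc, hF₀, Matrix.zero_mul]
  rw [Matrix.mul_sub, hF, sub_zero, Matrix.mul_neg, hCbar, Matrix.sub_mul, Matrix.one_mul,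
    Matrix.mul_assoc, sub_eq_add_neg]

theorem exists_rosenbrock_kernel_of_pbh_kernel [DecidableEq n] [DecidableEq m] [DecidableEq q]
    (hFp : F * Fp * F = F) (hCbar : Cbar = (1 - F * Fp) * C) (hEbar : Ebar = E * (1 - Fp * F))
    (hG : G = 1 - Ebar * CEp * Cbar) (hAbar : Abar = A - E * Fp * C) {s : R} {x : n → R}
    (h₁ : (s • 1 - G * Abar) *ᵥ x = 0) (h₂ : Cbar *ᵥ x = 0) :
    ∃ v, (A - s • 1) *ᵥ x + E *ᵥ v = 0 ∧ C *ᵥ x + F *ᵥ v = 0 := by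
  set V := -(Fp * C) - (1 - Fp * F) * CEp * Cbar * Abar
  refine ⟨V *ᵥ x, ?_, ?_⟩
  · rw [mulVec_mulVec, ← add_mulVec, sub_add_eq_add_sub,
      add_mul_feedback_eq_G_mul_Abar hEbar hG hAbar, ← neg_sub, neg_mulVec, h₁, neg_zero]
  · rw [mulVec_mulVec, ← add_mulVec, add_mul_feedback_eq_Cbar hFp hCbar, h₂]

theorem pbh_kernel_of_rosenbrock_kernel [DecidableEq n] [DecidableEq m] [DecidableEq q]
    (hFp : F * Fp * F = F) (hCbar : Cbar = (1 - F * Fp) * C) (hEbar : Ebar = E * (1 - Fp * F))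
    (hG : G = 1 - Ebar * CEp * Cbar) (hAbar : Abar = A - E * Fp * C) (hGE : G * Ebar = 0)
    {s : R} {x : n → R} {v : q → R}
    (h₁ : (A - s • 1) *ᵥ x + E *ᵥ v = 0) (h₂ : C *ᵥ x + F *ᵥ v = 0) :
    (s • 1 - G * Abar) *ᵥ x = 0 ∧ Cbar *ᵥ x = 0 := by
  have hCx : C *ᵥ x = -(F *ᵥ v) := eq_neg_of_add_eq_zero_left h₂
  have hCbarx : Cbar *ᵥ x = 0 := by
    rw [hCbar, Matrix.sub_mul, Matrix.one_mul, sub_mulVec, ← mulVec_mulVec, hCx, mulVec_neg,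
      mulVec_mulVec, hFp, sub_neg_eq_add, neg_add_cancel]
  have hAbarx : Abar *ᵥ x = s • x - Ebar *ᵥ v := by
    have hAx : A *ᵥ x = s • x - E *ᵥ v := by
      rw [sub_mulVec, smul_mulVec, one_mulVec] at h₁
      linear_combination (norm := module) h₁
    rw [hAbar, hEbar, sub_mulVec, ← mulVec_mulVec x (E * Fp), hCx, hAx, Matrix.mul_sub,
      Matrix.mul_one, sub_mulVec, mulVec_neg, mulVec_mulVec, Matrix.mul_assoc]
    abel
  have hGx : G *ᵥ x = x := by
    rw [hG, sub_mulVec, one_mulVec, ← mulVec_mulVec, hCbarx, mulVec_zero, sub_zero]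
  refine ⟨?_, hCbarx⟩
  rw [sub_mulVec, smul_mulVec, one_mulVec, ← mulVec_mulVec, hAbarx, mulVec_sub, mulVec_smul,
    mulVec_mulVec, hGE, zero_mulVec, hGx, sub_zero, sub_self]

end

theorem stmt3_general {n m q : ℕ}
    (A : Matrix (Fin n) (Fin n) ℝ) (C : Matrix (Fin m) (Fin n) ℝ)
    (E : Matrix (Fin n) (Fin q) ℝ) (F : Matrix (Fin m) (Fin q) ℝ)
    (Fp : Matrix (Fin q) (Fin m) ℝ)
    (hFp1 : F * Fp * F = F)
    (Cbar : Matrix (Fin m) (Fin n) ℝ)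
    (hCbar : Cbar = ((1 : Matrix (Fin m) (Fin m) ℝ) - F * Fp) * C)
    (Ebar : Matrix (Fin n) (Fin q) ℝ)
    (hEbar : Ebar = E * ((1 : Matrix (Fin q) (Fin q) ℝ) - Fp * F))
    (CEp : Matrix (Fin q) (Fin m) ℝ)
    (G : Matrix (Fin n) (Fin n) ℝ)
    (hG : G = (1 : Matrix (Fin n) (Fin n) ℝ) - Ebar * CEp * Cbar)
    (Abar : Matrix (Fin n) (Fin n) ℝ)
    (hAbar : Abar = A - E * Fp * C)
    (hGE : G * Ebar = 0) :
    (∀ s : ℂ,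
        (Matrix.fromBlocks (A.map Complex.ofReal - s • (1 : Matrix (Fin n) (Fin n) ℂ))
            (E.map Complex.ofReal) (C.map Complex.ofReal) (F.map Complex.ofReal)).rank =
          n + (Matrix.fromRows E F).rank) ↔
      (∀ s : ℂ,
        (Matrix.fromRows (s • (1 : Matrix (Fin n) (Fin n) ℂ) - (G * Abar).map Complex.ofReal)
            (Cbar.map Complex.ofReal)).rank = n) := by
  refine forall_congr' fun s => ?_
  have hblocks := rank_fromBlocks_eq_card_add_rank_iff (A.map Complex.ofReal - s • 1)
    (E.map Complex.ofReal) (C.map Complex.ofReal) (F.map Complex.ofReal)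
  have hrows := rank_fromRows_eq_card_width_iff (s • 1 - (G * Abar).map Complex.ofReal)
    (Cbar.map Complex.ofReal)
  rw [Fintype.card_fin] at hblocks hrows
  rw [← rank_map_algebraMap (L := ℂ) (fromRows E F), fromRows_map, Complex.coe_algebraMap,
    hblocks, hrows]
  have hGE' := congrArg (Matrix.map · Complex.ofReal) hGE
  subst hCbar hEbar hG hAbar
  simp only [← Complex.coe_algebraMap, Matrix.map_mul, Matrix.map_sub _ (map_sub _),
    Matrix.map_one _ (map_zero _) (map_one _), Matrix.map_zero _ (map_zero _)] at hGE' ⊢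
  have hFp : F.map (algebraMap ℝ ℂ) * Fp.map (algebraMap ℝ ℂ) * F.map (algebraMap ℝ ℂ) =
      F.map (algebraMap ℝ ℂ) := by
    rw [← Matrix.map_mul, ← Matrix.map_mul, hFp1]
  constructor
  · intro h x h₁ h₂
    obtain ⟨v, hv₁, hv₂⟩ := exists_rosenbrock_kernel_of_pbh_kernel hFp rfl rfl rfl rfl h₁ h₂
    exact h x v hv₁ hv₂
  · intro h x v h₁ h₂
    obtain ⟨hx₁, hx₂⟩ := pbh_kernel_of_rosenbrock_kernel hFp rfl rfl rfl rfl hGE' h₁ h₂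
    exact h x hx₁ hx₂

/-- Lemma 2: Under `G Ē = 0`, the rank condition
`rank [[A − s Iₙ, E],[C, F]] = n + rank [E; F]` for all `s ∈ ℂ` is equivalent to
the PBH observability of `(G Ā, C̄)`, i.e. `rank [s Iₙ − G Ā; C̄] = n` for all `s ∈ ℂ`. -/
theorem stmt3 {n m q : ℕ}
    (A : Matrix (Fin n) (Fin n) ℝ) (C : Matrix (Fin m) (Fin n) ℝ)
    (E : Matrix (Fin n) (Fin q) ℝ) (F : Matrix (Fin m) (Fin q) ℝ)
    (Fp : Matrix (Fin q) (Fin m) ℝ)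
    (hFp1 : F * Fp * F = F) (hFp2 : Fp * F * Fp = Fp)
    (Cbar : Matrix (Fin m) (Fin n) ℝ)
    (hCbar : Cbar = ((1 : Matrix (Fin m) (Fin m) ℝ) - F * Fp) * C)
    (Ebar : Matrix (Fin n) (Fin q) ℝ)
    (hEbar : Ebar = E * ((1 : Matrix (Fin q) (Fin q) ℝ) - Fp * F))
    (CEp : Matrix (Fin q) (Fin m) ℝ)
    (hCEp1 : (Cbar * Ebar) * CEp * (Cbar * Ebar) = Cbar * Ebar)
    (hCEp2 : CEp * (Cbar * Ebar) * CEp = CEp)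
    (G : Matrix (Fin n) (Fin n) ℝ)
    (hG : G = (1 : Matrix (Fin n) (Fin n) ℝ) - Ebar * CEp * Cbar)
    (Abar : Matrix (Fin n) (Fin n) ℝ)
    (hAbar : Abar = A - E * Fp * C)
    (hGE : G * Ebar = 0) :
    (∀ s : ℂ,
        (Matrix.fromBlocks (A.map Complex.ofReal - s • (1 : Matrix (Fin n) (Fin n) ℂ))
            (E.map Complex.ofReal) (C.map Complex.ofReal) (F.map Complex.ofReal)).rank =
          n + (Matrix.fromRows E F).rank) ↔
      (∀ s : ℂ,
        (Matrix.fromRows (s • (1 : Matrix (Fin n) (Fin n) ℂ) - (G * Abar).map Complex.ofReal)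
            (Cbar.map Complex.ofReal)).rank = n) :=
  stmt3_general A C E F Fp hFp1 Cbar hCbar Ebar hEbar CEp G hG Abar hAbar hGE
end

section
/- Let C ∈ ℝ^{m×n}, F ∈ ℝ^{m×q}, and let F⁺ be a generalized inverse of F. Then rank((I_m − F F⁺) C) = rank [C F] − rank F, where [C F] is the m×(n+q) matrix whose columns are those of C followed by those of F. -/
/-!
Because `F F⁺ F = F`, the kernel of `I − F F⁺` is exactly the column space of `F`. Hence
`rank ((I − F F⁺) C) = rank C − dim (col C ⊓ col F)`, while Grassmann's formula gives
`rank [C F] = rank C + rank F − dim (col C ⊓ col F)`.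
-/

open Matrix Module Submodule

theorem LinearMap.finrank_map_add_finrank_inf_ker {K V W : Type*} [DivisionRing K]
    [AddCommGroup V] [Module K V] [FiniteDimensional K V] [AddCommGroup W] [Module K W]
    (f : V →ₗ[K] W) (S : Submodule K V) :
    finrank K (S.map f) + finrank K ↥(S ⊓ LinearMap.ker f) = finrank K S := by
  rw [← LinearMap.range_domRestrict, ← (f.domRestrict S).finrank_range_add_finrank_ker,
    LinearMap.ker_domRestrict, ← (Submodule.comapSubtypeEquivOfLe inf_le_left).finrank_eq,
    Submodule.comap_inf, Submodule.comap_subtype_self, top_inf_eq]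

namespace Matrix

variable {K l m n : Type*} [Fintype m] [Fintype n]

theorem range_mulVecLin_fromCols_s4 [CommRing K] (A : Matrix l m K) (B : Matrix l n K) :
    LinearMap.range (fromCols A B).mulVecLin =
      LinearMap.range A.mulVecLin ⊔ LinearMap.range B.mulVecLin := by
  rw [range_mulVecLin, range_mulVecLin, range_mulVecLin, ← span_union, ← Set.Sum.elim_range]
  congr 2
  funext j
  cases j <;> rfl

theorem rank_mul_add_finrank_inf_ker [Field K] (A : Matrix l m K) (B : Matrix m n K) :
    (A * B).rank + finrank K ↥(LinearMap.range B.mulVecLin ⊓ LinearMap.ker A.mulVecLin) =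
      B.rank := by
  rw [rank, mulVecLin_mul, LinearMap.range_comp]
  exact A.mulVecLin.finrank_map_add_finrank_inf_ker _

theorem rank_fromCols_add_finrank_inf [Field K] (A : Matrix l m K) (B : Matrix l n K) :
    (fromCols A B).rank +
        finrank K ↥(LinearMap.range A.mulVecLin ⊓ LinearMap.range B.mulVecLin) =
      A.rank + B.rank := by
  rw [rank, range_mulVecLin_fromCols_s4]
  exact finrank_sup_add_finrank_inf_eq _ _

theorem ker_mulVecLin_one_sub_mul_eq_range_s4 [CommRing K] [Fintype l] [DecidableEq l]
    {F : Matrix l n K} {G : Matrix n l K} (h : F * G * F = F) :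
    LinearMap.ker (1 - F * G).mulVecLin = LinearMap.range F.mulVecLin := by
  ext x
  simp only [LinearMap.mem_ker, mulVecLin_apply, LinearMap.mem_range, sub_mulVec, one_mulVec,
    sub_eq_zero]
  constructor
  · intro hx
    exact ⟨G *ᵥ x, by rw [mulVec_mulVec, ← hx]⟩
  · rintro ⟨y, rfl⟩
    rw [mulVec_mulVec, h]

end Matrix

theorem stmt4_general {m n q : ℕ}
    (C : Matrix (Fin m) (Fin n) ℝ) (F : Matrix (Fin m) (Fin q) ℝ)
    (Fp : Matrix (Fin q) (Fin m) ℝ)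
    (hFp1 : F * Fp * F = F) :
    (((1 : Matrix (Fin m) (Fin m) ℝ) - F * Fp) * C).rank =
      (Matrix.fromCols C F).rank - F.rank := by
  have hC := (1 - F * Fp).rank_mul_add_finrank_inf_ker C
  rw [ker_mulVecLin_one_sub_mul_eq_range_s4 hFp1] at hC
  have hCF := rank_fromCols_add_finrank_inf C F
  omega

/-- For `C ∈ ℝ^{m×n}`, `F ∈ ℝ^{m×q}` with generalized inverse `F⁺` of `F`,
`rank((I_m − F F⁺) C) = rank [C F] − rank F`. -/
theorem stmt4 {m n q : ℕ}
    (C : Matrix (Fin m) (Fin n) ℝ) (F : Matrix (Fin m) (Fin q) ℝ)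
    (Fp : Matrix (Fin q) (Fin m) ℝ)
    (hFp1 : F * Fp * F = F) (hFp2 : Fp * F * Fp = Fp) :
    (((1 : Matrix (Fin m) (Fin m) ℝ) - F * Fp) * C).rank =
      (Matrix.fromCols C F).rank - F.rank :=
  stmt4_general C F Fp hFp1
end

section
/- Let E ∈ ℝ^{n×q}, F ∈ ℝ^{m×q}, and let F⁺ be a generalized inverse of F. Then rank(E (I_q − F⁺ F)) = rank [E; F] − rank F, where [E; F] is the (n+m)×q matrix whose rows are those of E followed by those of F. -/
/-!
Because `F F⁺ F = F`, the range of `I − F⁺F` is exactly `ker F`, so `rank (E (I − F⁺F))` is the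
dimension of `E (ker F)`. Rank–nullity for `E` restricted to `ker F`, for `F`, and for the stacked
map `x ↦ (E x, F x)`, whose kernel is `ker E ∩ ker F`, gives `dim E (ker F) + rank F = rank [E; F]`.
-/

open Module Submodule LinearMap

section

variable {K V W₁ W₂ : Type*} [Field K] [AddCommGroup V] [Module K V] [FiniteDimensional K V]
  [AddCommGroup W₁] [Module K W₁] [AddCommGroup W₂] [Module K W₂]

theorem LinearMap.finrank_map_ker_add_finrank_inf_ker (f : V →ₗ[K] W₁) (g : V →ₗ[K] W₂) :
    finrank K (map f (ker g)) + finrank K ↥(ker f ⊓ ker g) = finrank K (ker g) := by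
  rw [← range_domRestrict, ← finrank_range_add_finrank_ker (f.domRestrict (ker g)),
    ker_domRestrict, ← finrank_map_subtype_eq, map_comap_subtype, inf_comm]

theorem LinearMap.finrank_map_ker_add_finrank_range (f : V →ₗ[K] W₁) (g : V →ₗ[K] W₂) :
    finrank K (map f (ker g)) + finrank K (range g) = finrank K (range (f.prod g)) := by
  have hfg := finrank_range_add_finrank_ker (f.prod g)
  have hg := finrank_range_add_finrank_ker g
  have := f.finrank_map_ker_add_finrank_inf_ker g
  rw [ker_prod] at hfg
  omega

end

namespace Matrix

variable {K l m q : Type*} [Fintype q]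

theorem mulVecLin_fromRows [CommSemiring K] (E : Matrix l q K) (F : Matrix m q K) :
    (fromRows E F).mulVecLin =
      (LinearEquiv.sumArrowLequivProdArrow l m K K).symm.toLinearMap ∘ₗ
        E.mulVecLin.prod F.mulVecLin := by
  ext x i
  rcases i with i | i <;> simp [fromRows_mulVec]

theorem rank_fromRows [Field K] (E : Matrix l q K) (F : Matrix m q K) :
    (fromRows E F).rank = finrank K (range (E.mulVecLin.prod F.mulVecLin)) := by
  rw [rank, mulVecLin_fromRows, range_comp, LinearEquiv.finrank_map_eq]

theorem range_mulVecLin_one_sub_mul_eq_ker [CommRing K] [Fintype m] [DecidableEq q]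
    {F : Matrix m q K} {G : Matrix q m K} (hG : F * G * F = F) :
    range (1 - G * F).mulVecLin = ker F.mulVecLin := by
  apply le_antisymm
  · rintro _ ⟨x, rfl⟩
    rw [mem_ker, mulVecLin_apply, mulVecLin_apply, mulVec_mulVec, Matrix.mul_sub, Matrix.mul_one,
      ← Matrix.mul_assoc, hG, sub_self, zero_mulVec]
  · intro x hx
    refine ⟨x, ?_⟩
    rw [mem_ker, mulVecLin_apply] at hx
    rw [mulVecLin_apply, sub_mulVec, one_mulVec, ← mulVec_mulVec, hx, mulVec_zero, sub_zero]

end Matrix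

theorem stmt5_general {m n q : ℕ}
    (E : Matrix (Fin n) (Fin q) ℝ) (F : Matrix (Fin m) (Fin q) ℝ)
    (Fp : Matrix (Fin q) (Fin m) ℝ)
    (hFp1 : F * Fp * F = F) :
    (E * ((1 : Matrix (Fin q) (Fin q) ℝ) - Fp * F)).rank =
      (Matrix.fromRows E F).rank - F.rank := by
  have hEP : (E * (1 - Fp * F)).rank = finrank ℝ (map E.mulVecLin (ker F.mulVecLin)) := by
    rw [Matrix.rank, Matrix.mulVecLin_mul, range_comp,
      Matrix.range_mulVecLin_one_sub_mul_eq_ker hFp1]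
  have h := E.mulVecLin.finrank_map_ker_add_finrank_range F.mulVecLin
  rw [← Matrix.rank_fromRows, ← Matrix.rank] at h
  omega

/-- For `E ∈ ℝ^{n×q}`, `F ∈ ℝ^{m×q}` with generalized inverse `F⁺` of `F`,
`rank(E (I_q − F⁺ F)) = rank [E; F] − rank F`. -/
theorem stmt5 {m n q : ℕ}
    (E : Matrix (Fin n) (Fin q) ℝ) (F : Matrix (Fin m) (Fin q) ℝ)
    (Fp : Matrix (Fin q) (Fin m) ℝ)
    (hFp1 : F * Fp * F = F) (hFp2 : Fp * F * Fp = Fp) :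
    (E * ((1 : Matrix (Fin q) (Fin q) ℝ) - Fp * F)).rank =
      (Matrix.fromRows E F).rank - F.rank :=
  stmt5_general E F Fp hFp1
end

section
/- Assume G Ē = 0. Then rank(C̄ Ē) = rank Ē. Moreover, if Ē = Ē₀ Ē₁ is any factorization in which Ē₀ ∈ ℝ^{n×r} has full column rank r = rank Ē, then C̄ Ē₀ has full column rank, i.e. rank(C̄ Ē₀) = rank Ē. -/
namespace Matrix

variable {R : Type*} [CommSemiring R] [StrongRankCondition R] {k l m n : Type*}
  [Fintype l] [Fintype m] [Fintype n]

theorem rank_mul_eq_right_of_eq_mul [Fintype k] (A : Matrix k m R) (B : Matrix m n R)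
    (X : Matrix m k R) (hB : B = X * (A * B)) : (A * B).rank = B.rank :=
  le_antisymm (rank_mul_le_right A B) <| by
    conv_lhs => rw [hB]
    exact rank_mul_le_right X (A * B)

theorem rank_mul_eq_of_rank_mul_eq_of_factor (A : Matrix k m R) (B₀ : Matrix m l R)
    (B₁ : Matrix l n R) (hA : (A * (B₀ * B₁)).rank = (B₀ * B₁).rank)
    (hB₀ : B₀.rank = (B₀ * B₁).rank) : (A * B₀).rank = (B₀ * B₁).rank :=
  le_antisymm (hB₀ ▸ rank_mul_le_right A B₀) <| by
    rw [← hA, ← Matrix.mul_assoc]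
    exact rank_mul_le_left (A * B₀) B₁

end Matrix

theorem stmt6_general {m n q r : ℕ}
    (Cbar : Matrix (Fin m) (Fin n) ℝ) (Ebar : Matrix (Fin n) (Fin q) ℝ)
    (CEp : Matrix (Fin q) (Fin m) ℝ)
    (hGE : ((1 : Matrix (Fin n) (Fin n) ℝ) - Ebar * CEp * Cbar) * Ebar = 0) :
    (Cbar * Ebar).rank = Ebar.rank ∧
      ∀ (E0 : Matrix (Fin n) (Fin r) ℝ) (E1 : Matrix (Fin r) (Fin q) ℝ),
        Ebar = E0 * E1 → E0.rank = r → r = Ebar.rank →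
          (Cbar * E0).rank = Ebar.rank := by
  have hE : Ebar = Ebar * CEp * (Cbar * Ebar) := by
    rw [Matrix.sub_mul, Matrix.one_mul, sub_eq_zero] at hGE
    rwa [← Matrix.mul_assoc]
  have hrank := Matrix.rank_mul_eq_right_of_eq_mul Cbar Ebar (Ebar * CEp) hE
  refine ⟨hrank, fun E0 E1 hfac hE0 hr => ?_⟩
  subst hfac
  exact Matrix.rank_mul_eq_of_rank_mul_eq_of_factor Cbar E0 E1 hrank (hE0.trans hr)

/-- Theorem 3: With `G = I_n − Ē (C̄ Ē)⁺ C̄` and assuming `G Ē = 0`, one has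
`rank(C̄ Ē) = rank Ē`; moreover, for any factorization `Ē = Ē₀ Ē₁` where `Ē₀ ∈ ℝ^{n×r}` has
full column rank `r = rank Ē`, the matrix `C̄ Ē₀` has full column rank,
i.e. `rank(C̄ Ē₀) = rank Ē`. -/
theorem stmt6 {m n q r : ℕ}
    (Cbar : Matrix (Fin m) (Fin n) ℝ) (Ebar : Matrix (Fin n) (Fin q) ℝ)
    (CEp : Matrix (Fin q) (Fin m) ℝ)
    (hCEp1 : (Cbar * Ebar) * CEp * (Cbar * Ebar) = Cbar * Ebar)
    (hCEp2 : CEp * (Cbar * Ebar) * CEp = CEp)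
    (hGE : ((1 : Matrix (Fin n) (Fin n) ℝ) - Ebar * CEp * Cbar) * Ebar = 0) :
    (Cbar * Ebar).rank = Ebar.rank ∧
      ∀ (E0 : Matrix (Fin n) (Fin r) ℝ) (E1 : Matrix (Fin r) (Fin q) ℝ),
        Ebar = E0 * E1 → E0.rank = r → r = Ebar.rank →
          (Cbar * E0).rank = Ebar.rank :=
  stmt6_general Cbar Ebar CEp hGE
end

section
/- Let Z be an n×n complex matrix and C an m×n complex matrix such that C Z = 0 and for every s ∈ ℂ the (n+m)×n stacked matrix [s I_n − Z; C] has rank n. Then Z = 0 and rank C = n. -/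
/-!
The rank condition says that no eigenvector of `Z` lies in `ker C`. Since `C Z = 0`, the
`Z`-invariant subspace `range Z` lies in `ker C`, and over `ℂ` a nonzero `Z` has an eigenvector
in it; hence `Z = 0`. At `s = 0` the stacked matrix is then `[0; C]`, so `C` has full column rank.
-/

open Matrix Module

namespace Matrix

variable {K m n p : Type*} [Field K] [Fintype n]

theorem rank_eq_card_width_iff_s8 (A : Matrix m n K) :
    A.rank = Fintype.card n ↔ ∀ v, A *ᵥ v = 0 → v = 0 := by
  have hrn := LinearMap.finrank_range_add_finrank_ker A.mulVecLin
  rw [finrank_fintype_fun_eq_card] at hrn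
  rw [← ker_mulVecLin_eq_bot_iff, ← Submodule.finrank_eq_zero, rank]
  omega

theorem fromRows_mulVec_eq_zero_iff {A : Matrix m n K} {B : Matrix p n K} {v : n → K} :
    fromRows A B *ᵥ v = 0 ↔ A *ᵥ v = 0 ∧ B *ᵥ v = 0 := by
  rw [fromRows_mulVec, ← Sum.elim_zero_zero, Sum.elim_eq_iff]

end Matrix

theorem Module.End.exists_hasEigenvector_mem_range {K V : Type*} [Field K] [IsAlgClosed K]
    [AddCommGroup V] [Module K V] [FiniteDimensional K V] {f : End K V} (hf : f ≠ 0) :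
    ∃ μ v, f.HasEigenvector μ v ∧ v ∈ LinearMap.range f := by
  have : Nontrivial (LinearMap.range f) :=
    Submodule.nontrivial_iff_ne_bot.2 (LinearMap.range_eq_bot.not.2 hf)
  let g : End K (LinearMap.range f) := f.restrict fun x _ ↦ LinearMap.mem_range_self f x
  obtain ⟨μ, hμ⟩ := g.exists_eigenvalue
  obtain ⟨w, hw⟩ := hμ.exists_hasEigenvector
  have hfw : f w = μ • (w : V) := congrArg Subtype.val hw.apply_eq_smul
  exact ⟨μ, w, Module.End.hasEigenvector_iff.2
    ⟨Module.End.mem_eigenspace_iff.2 hfw, by simpa using hw.2⟩, w.2⟩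

/-- If `Z ∈ ℂ^{n×n}` and `C ∈ ℂ^{m×n}` satisfy `C Z = 0` and
`rank [s Iₙ − Z; C] = n` for every `s ∈ ℂ`, then `Z = 0` and `rank C = n`. -/
theorem stmt8 {n m : ℕ}
    (Z : Matrix (Fin n) (Fin n) ℂ) (C : Matrix (Fin m) (Fin n) ℂ)
    (hCZ : C * Z = 0)
    (hPBH : ∀ s : ℂ,
      (Matrix.fromRows (s • (1 : Matrix (Fin n) (Fin n) ℂ) - Z) C).rank = n) :
    Z = 0 ∧ C.rank = n := by
  have hker : ∀ (s : ℂ) v, Z *ᵥ v = s • v → C *ᵥ v = 0 → v = 0 := by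
    intro s v hZv hCv
    refine (rank_eq_card_width_iff_s8 _).1 ((hPBH s).trans (Fintype.card_fin n).symm) v
      (fromRows_mulVec_eq_zero_iff.2 ⟨?_, hCv⟩)
    rw [sub_mulVec, smul_mulVec, one_mulVec, hZv, sub_self]
  have hZ : Z = 0 := by
    by_contra hZ
    obtain ⟨μ, _, hv, w, rfl⟩ :=
      Module.End.exists_hasEigenvector_mem_range ((LinearEquiv.map_ne_zero_iff toLin').2 hZ)
    have hZv : Z *ᵥ (Z *ᵥ w) = μ • (Z *ᵥ w) := by simpa using hv.apply_eq_smul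
    have hCv : C *ᵥ (Z *ᵥ w) = 0 := by rw [mulVec_mulVec, hCZ, zero_mulVec]
    exact hv.2 (by simpa using hker μ _ hZv hCv)
  refine ⟨hZ, ((rank_eq_card_width_iff_s8 C).2 fun v hCv ↦ ?_).trans (Fintype.card_fin n)⟩
  exact hker 0 v (by simp [hZ]) hCv
end

section
/- Let n > m ≥ 1, let T₁, T₂ ∈ ℝ^{(n−m)×n} and C ∈ ℝ^{m×n} be such that both stacked n×n matrices [T₁; C] and [T₂; C] are invertible, and let S₁ ∈ ℝ^{n×(n−m)} satisfy T₁ S₁ = I_{n−m} and C S₁ = 0 (i.e. S₁ consists of the first n−m columns of [T₁; C]⁻¹). Then the (n−m)×(n−m) matrix T₂ S₁ is invertible. -/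
/-!
If `V` is a left inverse of `[T₂; C]` and `C S₁ = 0`, then `S₁ = V [T₂ S₁; 0] = V_L (T₂ S₁)`
with `V_L` the first block of columns of `V`. Hence `(T₁ V_L) (T₂ S₁) = T₁ S₁ = 1`, and a square
matrix with a left inverse is invertible.
-/

namespace Matrix

variable {R : Type*} [CommRing R] {k l n : Type*} [Fintype k] [Fintype l] [Fintype n]
  [DecidableEq n]

theorem eq_toCols₁_mul_of_mul_fromRows_eq_one {T : Matrix k n R} {C : Matrix l n R}
    {V : Matrix n (k ⊕ l) R} (hV : V * fromRows T C = 1) {S : Matrix n k R} (hCS : C * S = 0) :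
    S = V.toCols₁ * (T * S) :=
  calc S = V * fromRows T C * S := by rw [hV, Matrix.one_mul]
    _ = fromCols V.toCols₁ V.toCols₂ * fromRows (T * S) (C * S) := by
      rw [fromCols_toCols, Matrix.mul_assoc, fromRows_mul]
    _ = V.toCols₁ * (T * S) := by rw [hCS, fromCols_mul_fromRows, Matrix.mul_zero, add_zero]

theorem isUnit_mul_of_mul_fromRows_eq_one [DecidableEq k] {T₁ T₂ : Matrix k n R}
    {C : Matrix l n R} {V : Matrix n (k ⊕ l) R} (hV : V * fromRows T₂ C = 1) {S : Matrix n k R}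
    (hTS : T₁ * S = 1) (hCS : C * S = 0) : IsUnit (T₂ * S) := by
  have hS := eq_toCols₁_mul_of_mul_fromRows_eq_one hV hCS
  have hleft : T₁ * V.toCols₁ * (T₂ * S) = 1 := by rw [Matrix.mul_assoc, ← hS, hTS]
  exact (isUnit_iff_isUnit_det _).mpr (isUnit_det_of_left_inverse hleft)

end Matrix

theorem stmt9_general {n m : ℕ}
    (T1 T2 : Matrix (Fin (n - m)) (Fin n) ℝ) (C : Matrix (Fin m) (Fin n) ℝ)
    (hinv2 : ∃ V2 : Matrix (Fin n) (Fin (n - m) ⊕ Fin m) ℝ,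
      Matrix.fromRows T2 C * V2 = 1 ∧ V2 * Matrix.fromRows T2 C = 1)
    (S1 : Matrix (Fin n) (Fin (n - m)) ℝ)
    (hS1a : T1 * S1 = 1) (hS1b : C * S1 = 0) :
    IsUnit (T2 * S1) := by
  obtain ⟨V2, -, hV2⟩ := hinv2
  exact Matrix.isUnit_mul_of_mul_fromRows_eq_one hV2 hS1a hS1b

/-- Let `n > m ≥ 1`, `T₁, T₂ ∈ ℝ^{(n−m)×n}`, `C ∈ ℝ^{m×n}` with both stacked
matrices `[T₁; C]` and `[T₂; C]` invertible, and let `S₁ ∈ ℝ^{n×(n−m)}` satisfy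
`T₁ S₁ = I` and `C S₁ = 0` (so that `S₁` consists of the first `n−m` columns of
`[T₁; C]⁻¹`).  Then `T₂ S₁` is invertible. -/
theorem stmt9 {n m : ℕ} (hm : 1 ≤ m) (hmn : m < n)
    (T1 T2 : Matrix (Fin (n - m)) (Fin n) ℝ) (C : Matrix (Fin m) (Fin n) ℝ)
    (hinv1 : ∃ V1 : Matrix (Fin n) (Fin (n - m) ⊕ Fin m) ℝ,
      Matrix.fromRows T1 C * V1 = 1 ∧ V1 * Matrix.fromRows T1 C = 1)
    (hinv2 : ∃ V2 : Matrix (Fin n) (Fin (n - m) ⊕ Fin m) ℝ,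
      Matrix.fromRows T2 C * V2 = 1 ∧ V2 * Matrix.fromRows T2 C = 1)
    (S1 : Matrix (Fin n) (Fin (n - m)) ℝ)
    (hS1a : T1 * S1 = 1) (hS1b : C * S1 = 0) :
    IsUnit (T2 * S1) :=
  stmt9_general T1 T2 C hinv2 S1 hS1a hS1b
end

section
/- Let M₁ ∈ ℝ^{k₁×k₁}, M₂ ∈ ℝ^{k₂×k₂}, K ∈ ℝ^{k₂×k₁}, and σ ∈ ℝ be such that every complex eigenvalue μ of M₂ satisfies Re μ < σ and every complex eigenvalue ν of M₁ satisfies Re ν > σ. Then exp(τ M₂) · K · exp(−τ M₁) tends to the zero matrix as τ → +∞. -/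
/-!
After shifting by `σ` it suffices to show `exp (τ • A) → 0` for a real matrix `A` whose complex
eigenvalues lie in the open left half-plane. A common eigenvector of the commuting matrices `A`
and `exp A` shows that every eigenvalue of `exp A` is `exp z` for an eigenvalue `z` of `A`, so
`exp A` has spectral radius `< 1` and Gelfand's formula gives `exp A ^ k → 0`. Writing
`τ = ⌊τ⌋ + (τ - ⌊τ⌋)` and bounding `exp (s • A)` on `s ∈ [0, 1]` passes to real times.
-/

open Filter Topology NormedSpace
open scoped Matrix

theorem Module.End.exists_hasEigenvector_of_commute {K V : Type*} [Field K] [IsAlgClosed K]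
    [AddCommGroup V] [Module K V] [FiniteDimensional K V] {f g : Module.End K V}
    (hfg : Commute f g) {μ : K} (hμ : g.HasEigenvalue μ) :
    ∃ z v, f.HasEigenvector z v ∧ g.HasEigenvector μ v := by
  have : Nontrivial (g.eigenspace μ) := Submodule.nontrivial_iff_ne_bot.mpr hμ
  obtain ⟨z, hz⟩ :=
    Module.End.exists_eigenvalue (f.restrict (mapsTo_genEigenspace_of_comm hfg.symm μ 1))
  obtain ⟨⟨v, hvμ⟩, hvz, hv0⟩ := hz.exists_hasEigenvector
  have hv0 : v ≠ 0 := fun h => hv0 (Subtype.ext h)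
  refine ⟨z, v, ⟨?_, hv0⟩, hvμ, hv0⟩
  rw [Module.End.mem_eigenspace_iff] at hvz ⊢
  exact congrArg Subtype.val hvz

theorem tendsto_pow_atTop_nhds_zero_of_spectralRadius_lt_one {A : Type*} [NormedRing A]
    [NormedAlgebra ℂ A] [CompleteSpace A] {a : A} (ha : spectralRadius ℂ a < 1) :
    Tendsto (fun n : ℕ => a ^ n) atTop (𝓝 0) := by
  obtain ⟨r, hr0, hρr, hr⟩ := ENNReal.lt_iff_exists_real_btwn.mp ha
  have hr1 : r < 1 := by simpa using hr
  have hbound : ∀ᶠ n : ℕ in atTop, ‖a ^ n‖ ≤ r ^ n := by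
    filter_upwards [(spectrum.pow_norm_pow_one_div_tendsto_nhds_spectralRadius a)
      |>.eventually_lt_const hρr, eventually_gt_atTop 0] with n hn hn0
    rw [ENNReal.ofReal_lt_ofReal_iff', one_div,
      Real.rpow_inv_lt_iff_of_pos (norm_nonneg _) hr0 (by positivity)] at hn
    exact_mod_cast hn.1.le
  exact tendsto_zero_iff_norm_tendsto_zero.mpr <| squeeze_zero' (.of_forall fun _ => norm_nonneg _)
    hbound (tendsto_pow_atTop_nhds_zero_of_lt_one hr0 hr1)

theorem tendsto_exp_smul_atTop_nhds_zero_of_tendsto_pow {𝔸 : Type*} [NormedRing 𝔸]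
    [NormedAlgebra ℝ 𝔸] [CompleteSpace 𝔸] {a : 𝔸}
    (ha : Tendsto (fun n : ℕ => exp a ^ n) atTop (𝓝 0)) :
    Tendsto (fun τ : ℝ => exp (τ • a)) atTop (𝓝 0) := by
  let : NormedAlgebra ℚ 𝔸 := .restrictScalars ℚ ℝ 𝔸
  obtain ⟨C, hC⟩ := (isCompact_Icc (a := (0 : ℝ)) (b := 1)).exists_bound_of_continuousOn
    (f := fun s : ℝ => exp (s • a)) (by fun_prop)
  have hsplit (τ : ℝ) : exp a ^ ⌊τ⌋₊ * exp ((τ - ⌊τ⌋₊) • a) = exp (τ • a) := by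
    rw [← exp_nsmul, ← exp_add_of_commute ((Commute.refl a).smul_left _ |>.smul_right _),
      ← Nat.cast_smul_eq_nsmul ℝ, ← add_smul, add_sub_cancel]
  refine ((ha.comp tendsto_nat_floor_atTop).zero_mul_isBoundedUnder_le ?_).congr hsplit
  refine isBoundedUnder_of_eventually_le (a := C) ?_
  filter_upwards [eventually_ge_atTop 0] with τ hτ
  exact hC _ ⟨by linarith [Nat.floor_le hτ], by linarith [Nat.lt_floor_add_one τ]⟩

namespace Matrix

variable {n : Type*} [Fintype n] [DecidableEq n]

theorem mem_spectrum_map_iff_mem_roots {K L : Type*} [Field K] [Field L] (f : K →+* L)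
    (M : Matrix n n K) (z : L) :
    z ∈ spectrum L (M.map f) ↔ z ∈ (M.charpoly.map f).roots := by
  rw [← charpoly_map, Polynomial.mem_roots (M.map f).charpoly_monic.ne_zero,
    mem_spectrum_iff_isRoot_charpoly]

section LinftyOpNorm

attribute [local instance] Matrix.linftyOpNormedRing Matrix.linftyOpNormedAlgebra

theorem exp_mulVec_of_mulVec_eq_smul {𝕂 : Type*} [RCLike 𝕂] {A : Matrix n n 𝕂} {μ : 𝕂}
    {v : n → 𝕂} (hv : A *ᵥ v = μ • v) : exp A *ᵥ v = exp μ • v := by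
  have hpow (k : ℕ) : A ^ k *ᵥ v = μ ^ k • v := by
    induction k with
    | zero => simp
    | succ k ih => rw [pow_succ', ← mulVec_mulVec, ih, mulVec_smul, hv, smul_smul, ← pow_succ]
  have hA := (exp_series_hasSum_exp' (𝕂 := 𝕂) A).map (mulVec.addMonoidHomLeft v)
    (continuous_id.matrix_mulVec continuous_const)
  refine hA.unique ?_
  convert (exp_series_hasSum_exp' (𝕂 := 𝕂) μ).smul_const v using 2 with k
  simp [mulVec.addMonoidHomLeft, smul_mulVec, hpow, smul_smul]

theorem spectrum_exp_subset (A : Matrix n n ℂ) : spectrum ℂ (exp A) ⊆ exp '' spectrum ℂ A := by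
  intro μ hμ
  rw [← AlgEquiv.spectrum_eq toLinAlgEquiv', ← Module.End.hasEigenvalue_iff_mem_spectrum] at hμ
  have hcomm : Commute (toLinAlgEquiv' A) (toLinAlgEquiv' (exp A)) :=
    ((Commute.refl A).exp_right).map _
  obtain ⟨z, v, hA, hexpA⟩ := Module.End.exists_hasEigenvector_of_commute hcomm hμ
  refine ⟨z, ?_, smul_left_injective ℂ hexpA.2 ?_⟩
  · rw [← AlgEquiv.spectrum_eq toLinAlgEquiv', ← Module.End.hasEigenvalue_iff_mem_spectrum]
    exact Module.End.hasEigenvalue_of_hasEigenvector hA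
  · have hAv : A *ᵥ v = z • v := by simpa using hA.apply_eq_smul
    simpa [← exp_mulVec_of_mulVec_eq_smul hAv] using hexpA.apply_eq_smul

theorem tendsto_exp_pow_atTop_nhds_zero (A : Matrix n n ℂ) (hA : ∀ z ∈ spectrum ℂ A, z.re < 0) :
    Tendsto (fun k : ℕ => exp A ^ k) atTop (𝓝 0) := by
  rcases subsingleton_or_nontrivial (Matrix n n ℂ) with _ | _
  · exact tendsto_const_nhds.congr fun _ => Subsingleton.elim _ _
  refine tendsto_pow_atTop_nhds_zero_of_spectralRadius_lt_one
    (spectrum.spectralRadius_lt_of_forall_lt _ fun μ hμ => ?_)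
  obtain ⟨z, hz, rfl⟩ := A.spectrum_exp_subset hμ
  rw [← NNReal.coe_lt_coe, coe_nnnorm, ← Complex.exp_eq_exp_ℂ, Complex.norm_exp]
  simpa using hA z hz

theorem map_exp {R S : Type*} [RCLike R] [RCLike S] (f : R →+* S) (hf : Continuous f)
    (A : Matrix n n R) : (exp A).map f = exp (A.map f) :=
  NormedSpace.map_exp f.mapMatrix (continuous_id.matrix_map hf) A

theorem tendsto_exp_smul_atTop_nhds_zero (A : Matrix n n ℝ)
    (hA : ∀ z ∈ spectrum ℂ (A.map (algebraMap ℝ ℂ)), z.re < 0) :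
    Tendsto (fun τ : ℝ => exp (τ • A)) atTop (𝓝 0) := by
  refine tendsto_exp_smul_atTop_nhds_zero_of_tendsto_pow ?_
  -- Gelfand's formula needs a complex Banach algebra: go through the complexification.
  have hre (k : ℕ) : (exp (A.map (algebraMap ℝ ℂ)) ^ k).map Complex.re = exp A ^ k := by
    rw [← map_exp _ (continuous_algebraMap ℝ ℂ), ← RingHom.mapMatrix_apply, ← map_pow,
      RingHom.mapMatrix_apply, map_map]
    ext
    simp
  have hc := ((continuous_id'.matrix_map Complex.continuous_re).tendsto 0).comp
    ((A.map (algebraMap ℝ ℂ)).tendsto_exp_pow_atTop_nhds_zero hA)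
  rw [Matrix.map_zero _ Complex.zero_re] at hc
  exact hc.congr hre

theorem tendsto_exp_neg_mul_smul_exp_smul (M : Matrix n n ℝ) {σ : ℝ}
    (hM : ∀ z ∈ spectrum ℂ (M.map (algebraMap ℝ ℂ)), z.re < σ) :
    Tendsto (fun τ : ℝ => Real.exp (-(τ * σ)) • exp (τ • M)) atTop (𝓝 0) := by
  have hshift : ∀ z ∈ spectrum ℂ ((M - algebraMap ℝ _ σ).map (algebraMap ℝ ℂ)), z.re < 0 := by
    intro z hz
    have hmap : (M - algebraMap ℝ _ σ).map (algebraMap ℝ ℂ)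
        = M.map (algebraMap ℝ ℂ) - algebraMap ℂ _ (σ : ℂ) := by
      ext i j
      by_cases h : i = j <;> simp [algebraMap_matrix_apply, h]
    rw [hmap, ← spectrum.sub_singleton_eq] at hz
    obtain ⟨w, hw, _, rfl, rfl⟩ := hz
    simpa using hM w hw
  refine ((M - algebraMap ℝ _ σ).tendsto_exp_smul_atTop_nhds_zero hshift).congr fun τ => ?_
  calc exp (τ • (M - algebraMap ℝ _ σ)) = exp (algebraMap ℝ _ (-(τ * σ)) + τ • M) := by
        congr 1
        rw [Algebra.algebraMap_eq_smul_one, Algebra.algebraMap_eq_smul_one]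
        module
    _ = algebraMap ℝ _ (exp (-(τ * σ))) * exp (τ • M) := by
        rw [exp_add_of_commute _ _ (Algebra.commute_algebraMap_left _ _),
          show exp (algebraMap ℝ (Matrix n n ℝ) (-(τ * σ))) = algebraMap ℝ _ (exp (-(τ * σ))) from
            (algebraMap_exp_comm _).symm]
    _ = Real.exp (-(τ * σ)) • exp (τ • M) := by rw [← Algebra.smul_def, Real.exp_eq_exp_ℝ]

end LinftyOpNorm

end Matrix

/-- If every complex eigenvalue `μ` of `M₂` satisfies `Re μ < σ` and every
complex eigenvalue `ν` of `M₁` satisfies `Re ν > σ`, then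
`exp(τ M₂) · K · exp(−τ M₁) → 0` as `τ → +∞`. -/
theorem stmt11 {k1 k2 : ℕ}
    (M1 : Matrix (Fin k1) (Fin k1) ℝ) (M2 : Matrix (Fin k2) (Fin k2) ℝ)
    (K : Matrix (Fin k2) (Fin k1) ℝ) (σ : ℝ)
    (hM2 : ∀ μ ∈ (M2.charpoly.map (algebraMap ℝ ℂ)).roots, μ.re < σ)
    (hM1 : ∀ ν ∈ (M1.charpoly.map (algebraMap ℝ ℂ)).roots, σ < ν.re) :
    Filter.Tendsto
      (fun τ : ℝ => NormedSpace.exp (τ • M2) * K * NormedSpace.exp (-(τ • M1)))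
      Filter.atTop (nhds 0) := by
  have h2 := M2.tendsto_exp_neg_mul_smul_exp_smul fun z hz =>
    hM2 z ((Matrix.mem_spectrum_map_iff_mem_roots _ _ _).mp hz)
  have h1 := (-M1).tendsto_exp_neg_mul_smul_exp_smul (σ := -σ) fun z hz => by
    rw [Matrix.map_neg _ (map_neg _), ← spectrum.neg_eq, Set.mem_neg,
      Matrix.mem_spectrum_map_iff_mem_roots] at hz
    linarith [Complex.neg_re z, hM1 _ hz]
  have hmul : Continuous fun p : Matrix (Fin k2) (Fin k2) ℝ × Matrix (Fin k1) (Fin k1) ℝ =>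
      p.1 * K * p.2 :=
    (continuous_fst.matrix_mul continuous_const).matrix_mul continuous_snd
  have hprod := (hmul.tendsto (0, 0)).comp (h2.prodMk_nhds h1)
  simp only [Matrix.zero_mul, Matrix.mul_zero] at hprod
  refine hprod.congr fun τ => ?_
  simp [smul_neg, Matrix.smul_mul, Matrix.mul_smul, smul_smul, ← Real.exp_add]
end
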